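/- arXiv:2006.08416 — 4 statements merged into one kernel-verified Lean document; each statement's English description precedes it below -/
import Mathlib

section
/- The function F(τ) = (τ/2)(δ - 1/2) + σ²/(2τ) + (τ/2)∫_{2/τ}^∞ (x - 2/τ)² φ(x) dx, where φ is the standard normal density, is strictly convex on (0, ∞) for any σ² > 0 and δ > 1/2. -/
open Real Set MeasureTheory

/-- standard normal density -/
noncomputable def stdPDF (x : ℝ) : ℝ := Real.exp (-x ^ 2 / 2) / Real.sqrt (2 * Real.pi)

lemma stdPDF_nonneg (x : ℝ) : 0 ≤ stdPDF x := by
  unfold stdPDF; positivity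

lemma continuous_stdPDF : Continuous stdPDF := by
  unfold stdPDF
  fun_prop

lemma integrable_stdPDF : Integrable stdPDF := by
  have h : Integrable (fun x : ℝ => Real.exp (-(1/2:ℝ)*x^2)) :=
    integrable_exp_neg_mul_sq (by norm_num)
  have h2 : Integrable (fun x : ℝ => Real.exp (-(1/2:ℝ)*x^2) * (Real.sqrt (2*Real.pi))⁻¹) :=
    h.mul_const _
  refine h2.congr ?_
  filter_upwards with x
  unfold stdPDF
  rw [div_eq_mul_inv]
  ring_nf

lemma integrable_sq_stdPDF : Integrable (fun x : ℝ => x^2 * stdPDF x) := by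
  have h : Integrable (fun x : ℝ => x^2 * Real.exp (-(1/2:ℝ)*x^2)) := by
    have := integrable_rpow_mul_exp_neg_mul_sq (b := (1/2:ℝ)) (by norm_num) (s := 2) (by norm_num)
    simpa [Real.rpow_natCast] using this
  have h2 : Integrable (fun x : ℝ => x^2 * Real.exp (-(1/2:ℝ)*x^2) * (Real.sqrt (2*Real.pi))⁻¹) :=
    h.mul_const _
  refine h2.congr ?_
  filter_upwards with x
  unfold stdPDF
  rw [div_eq_mul_inv]
  ring_nf

/-- quadratic over linear inequality -/
lemma quad_over_lin {P Q a b u v : ℝ} (ha : 0 ≤ a) (hb : 0 ≤ b)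
    (hP : 0 < P) (hQ : 0 < Q) (hden : 0 < a*P + b*Q) :
    (a*u+b*v)^2/(a*P+b*Q) ≤ a*(u^2/P) + b*(v^2/Q) := by
  have key : a*(u^2/P) + b*(v^2/Q) - (a*u+b*v)^2/(a*P+b*Q)
      = a*b*(u*Q - v*P)^2/(P*Q*(a*P+b*Q)) := by
    field_simp
    ring
  nlinarith [div_nonneg (mul_nonneg (mul_nonneg ha hb) (sq_nonneg (u*Q-v*P)))
    (le_of_lt (by positivity : (0:ℝ) < P*Q*(a*P+b*Q)))]

/-- pointwise convexity of the integrand -/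
lemma convexOn_g (x : ℝ) :
    ConvexOn ℝ (Ioi (0:ℝ)) (fun τ => (max (τ*x-2) 0)^2 / (2*τ)) := by
  refine ⟨convex_Ioi 0, ?_⟩
  intro p hp q hq a b ha hb hab
  simp only [smul_eq_mul, mem_Ioi] at *
  have hden : 0 < a*(2*p) + b*(2*q) := by
    rcases ha.eq_or_lt with h | h
    · have hb1 : b = 1 := by linarith
      rw [← h, hb1]; linarith
    · nlinarith [mul_nonneg hb hq.le]
  set u := max (p*x-2) 0 with hu
  set v := max (q*x-2) 0 with hv
  have hu0 : 0 ≤ u := le_max_right _ _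
  have hv0 : 0 ≤ v := le_max_right _ _
  have hw : max ((a*p+b*q)*x-2) 0 ≤ a*u + b*v := by
    apply max_le
    · have h1 : p*x-2 ≤ u := le_max_left _ _
      have h2 : q*x-2 ≤ v := le_max_left _ _
      nlinarith [mul_le_mul_of_nonneg_left h1 ha, mul_le_mul_of_nonneg_left h2 hb]
    · positivity
  have hw0 : 0 ≤ max ((a*p+b*q)*x-2) 0 := le_max_right _ _
  have step1 : (max ((a*p+b*q)*x-2) 0)^2 / (2*(a*p+b*q)) ≤ (a*u+b*v)^2 / (2*(a*p+b*q)) := by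
    apply div_le_div_of_nonneg_right ?_ (by nlinarith)
    · exact pow_le_pow_left₀ hw0 hw 2
  have e : 2*(a*p+b*q) = a*(2*p) + b*(2*q) := by ring
  calc (max ((a*p+b*q)*x-2) 0)^2 / (2*(a*p+b*q))
      ≤ (a*u+b*v)^2 / (a*(2*p) + b*(2*q)) := by rw [← e]; exact step1
    _ ≤ a*(u^2/(2*p)) + b*(v^2/(2*q)) :=
        quad_over_lin ha hb (by linarith) (by linarith) (e ▸ (by nlinarith : (0:ℝ) < 2*(a*p+b*q)))

/-- integrability of the integrand -/
lemma integrable_g {τ : ℝ} (hτ : 0 < τ) :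
    Integrable (fun x : ℝ => (max (τ*x-2) 0)^2/(2*τ) * stdPDF x) := by
  have hmaj : Integrable (fun x : ℝ => τ * (x^2 * stdPDF x) + (4/τ) * stdPDF x) :=
    (integrable_sq_stdPDF.const_mul τ).add (integrable_stdPDF.const_mul (4/τ))
  refine hmaj.mono' ?_ ?_
  · apply Continuous.aestronglyMeasurable
    apply Continuous.mul ?_ continuous_stdPDF
    apply Continuous.div_const
    apply Continuous.pow
    exact ((continuous_const.mul continuous_id).sub continuous_const).max continuous_const
  · filter_upwards with x
    have h0 : 0 ≤ (max (τ*x-2) 0)^2/(2*τ) * stdPDF x :=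
      mul_nonneg (by positivity) (stdPDF_nonneg x)
    rw [Real.norm_of_nonneg h0]
    have hb : (max (τ*x-2) 0)^2/(2*τ) ≤ τ * x^2 + 4/τ := by
      rw [div_le_iff₀ (by positivity)]
      have h1 : (max (τ*x-2) 0)^2 ≤ (τ*x-2)^2 := by
        rcases le_total (τ*x-2) 0 with h | h
        · rw [max_eq_right h]; nlinarith [sq_nonneg (τ*x-2)]
        · rw [max_eq_left h]
      have h8 : 4/τ*(2*τ) = 8 := by field_simp; ring
      nlinarith [sq_nonneg (τ*x+2), sq_nonneg (τ*x-2), sq_nonneg (τ*x)]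
    have := mul_le_mul_of_nonneg_right hb (stdPDF_nonneg x)
    calc (max (τ*x-2) 0)^2/(2*τ) * stdPDF x ≤ (τ * x^2 + 4/τ) * stdPDF x := this
      _ = τ * (x^2 * stdPDF x) + (4/τ) * stdPDF x := by ring

/-- convexity of the integral term -/
lemma convexOn_G :
    ConvexOn ℝ (Ioi (0:ℝ)) (fun τ => ∫ x, (max (τ*x-2) 0)^2/(2*τ) * stdPDF x) := by
  refine ⟨convex_Ioi 0, ?_⟩
  intro p hp q hq a b ha hb hab
  simp only [smul_eq_mul]
  have hmem : a*p + b*q ∈ Ioi (0:ℝ) := by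
    have := (convex_Ioi (0:ℝ)) hp hq ha hb hab
    simpa using this
  have hip : Integrable (fun x : ℝ => (max (p*x-2) 0)^2/(2*p) * stdPDF x) := integrable_g hp
  have hiq : Integrable (fun x : ℝ => (max (q*x-2) 0)^2/(2*q) * stdPDF x) := integrable_g hq
  have key : ∫ x, (max ((a*p+b*q)*x-2) 0)^2/(2*(a*p+b*q)) * stdPDF x
      ≤ ∫ x, (a * ((max (p*x-2) 0)^2/(2*p) * stdPDF x)
            + b * ((max (q*x-2) 0)^2/(2*q) * stdPDF x)) := by
    apply integral_mono_of_nonneg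
    · filter_upwards with x
      have hd : (0:ℝ) ≤ 2*(a*p+b*q) := by have := mem_Ioi.mp hmem; linarith
      exact mul_nonneg (div_nonneg (sq_nonneg _) hd) (stdPDF_nonneg x)
    · exact (hip.const_mul a).add (hiq.const_mul b)
    · filter_upwards with x
      have hcx := (convexOn_g x).2 hp hq ha hb hab
      simp only [smul_eq_mul] at hcx
      have := mul_le_mul_of_nonneg_right hcx (stdPDF_nonneg x)
      calc (max ((a*p+b*q)*x-2) 0)^2/(2*(a*p+b*q)) * stdPDF x
          ≤ (a * ((max (p*x-2) 0)^2/(2*p)) + b * ((max (q*x-2) 0)^2/(2*q))) * stdPDF x := this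
        _ = a * ((max (p*x-2) 0)^2/(2*p) * stdPDF x)
            + b * ((max (q*x-2) 0)^2/(2*q) * stdPDF x) := by ring
  calc ∫ x, (max ((a*p+b*q)*x-2) 0)^2/(2*(a*p+b*q)) * stdPDF x
      ≤ ∫ x, (a * ((max (p*x-2) 0)^2/(2*p) * stdPDF x)
            + b * ((max (q*x-2) 0)^2/(2*q) * stdPDF x)) := key
    _ = a * (∫ x, (max (p*x-2) 0)^2/(2*p) * stdPDF x)
        + b * (∫ x, (max (q*x-2) 0)^2/(2*q) * stdPDF x) := by
        rw [integral_add (hip.const_mul a) (hiq.const_mul b),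
          MeasureTheory.integral_const_mul, MeasureTheory.integral_const_mul]

/-- equality of the two forms of the integral term -/
lemma G_eq {τ : ℝ} (hτ : 0 < τ) :
    τ / 2 * ∫ x in Ioi (2/τ), (x - 2/τ)^2 * stdPDF x
      = ∫ x, (max (τ*x-2) 0)^2/(2*τ) * stdPDF x := by
  rw [← MeasureTheory.integral_const_mul, ← integral_indicator measurableSet_Ioi]
  congr 1
  ext x
  by_cases h : x ∈ Ioi (2/τ)
  · rw [Set.indicator_of_mem h]
    have hx : 2/τ < x := h
    have h2 : 0 < τ*x - 2 := by
      have := (div_lt_iff₀ hτ).mp hx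
      nlinarith
    rw [max_eq_left h2.le]
    have : τ/2 * (x - 2/τ)^2 = (τ*x-2)^2/(2*τ) := by
      field_simp
    calc τ/2 * ((x - 2/τ)^2 * stdPDF x) = (τ/2 * (x - 2/τ)^2) * stdPDF x := by ring
      _ = (τ*x-2)^2/(2*τ) * stdPDF x := by rw [this]
  · rw [Set.indicator_of_notMem h]
    have hx : x ≤ 2/τ := by simpa using h
    have h2 : τ*x - 2 ≤ 0 := by
      have := (le_div_iff₀ hτ).mp hx
      nlinarith
    rw [max_eq_right h2]
    simp

lemma StrictConvexOn.const_mul' {s : Set ℝ} {f : ℝ → ℝ} (hf : StrictConvexOn ℝ s f)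
    {c : ℝ} (hc : 0 < c) : StrictConvexOn ℝ s (fun x => c * f x) := by
  refine ⟨hf.1, fun x hx y hy hxy a b ha hb hab => ?_⟩
  have h := hf.2 hx hy hxy ha hb hab
  simp only [smul_eq_mul] at *
  nlinarith [mul_lt_mul_of_pos_left h hc]

lemma strictConvexOn_congr {s : Set ℝ} {f g : ℝ → ℝ}
    (hf : StrictConvexOn ℝ s f) (h : ∀ x ∈ s, f x = g x) : StrictConvexOn ℝ s g := by
  refine ⟨hf.1, fun x hx y hy hxy a b ha hb hab => ?_⟩
  rw [← h x hx, ← h y hy, ← h _ (hf.1 hx hy ha.le hb.le hab)]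
  exact hf.2 hx hy hxy ha hb hab

theorem F_strictConvex (σ2 δ : ℝ) (hσ : 0 < σ2) (hδ : 1 / 2 < δ) :
    StrictConvexOn ℝ (Set.Ioi (0 : ℝ))
      (fun τ : ℝ => τ / 2 * (δ - 1 / 2) + σ2 / (2 * τ)
        + τ / 2 * ∫ x in Set.Ioi (2 / τ), (x - 2 / τ) ^ 2 * stdPDF x) := by
  have hlin : ConvexOn ℝ (Ioi (0:ℝ)) (fun τ : ℝ => τ / 2 * (δ - 1/2)) := by
    refine ⟨convex_Ioi 0, fun x _ y _ a b _ _ _ => ?_⟩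
    simp only [smul_eq_mul]
    apply le_of_eq
    ring
  have hinv : StrictConvexOn ℝ (Ioi (0:ℝ)) (fun τ : ℝ => (σ2/2) * τ ^ (-1:ℤ)) :=
    (strictConvexOn_zpow (by norm_num) (by norm_num)).const_mul' (by linarith)
  have hsum : StrictConvexOn ℝ (Ioi (0:ℝ))
      (fun τ : ℝ => (τ / 2 * (δ - 1/2) + (σ2/2) * τ ^ (-1:ℤ))
        + ∫ x, (max (τ*x-2) 0)^2/(2*τ) * stdPDF x) :=
    (hlin.add_strictConvexOn hinv).add_convexOn convexOn_G
  apply strictConvexOn_congr hsum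
  intro τ hτ
  have hτ0 : 0 < τ := hτ
  have h1 : (σ2/2) * τ ^ (-1:ℤ) = σ2 / (2*τ) := by
    rw [zpow_neg_one]
    field_simp
  rw [h1, G_eq hτ0]
end

section
/- Let ℓ̂ : [-1,1] → ℝ be K-strongly convex with minimizer x̂, and let ℓ : [-1,1] → ℝ be any function with minimizer x* such that |ℓ̂(x) - ℓ(x)| ≤ ε at both x = x* and x = x̂. Then |x* - x̂| ≤ 2√(ε/K). -/
open Real Set

theorem approx_minimizer_close (K ε : ℝ) (hK : 0 < K) (hε : 0 < ε)
    (lhat l : ℝ → ℝ) (xhat xstar : ℝ)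
    (hxhat : xhat ∈ Set.Icc (-1 : ℝ) 1) (hxstar : xstar ∈ Set.Icc (-1 : ℝ) 1)
    (hstrong : ∀ x ∈ Set.Icc (-1 : ℝ) 1, K / 2 * (x - xhat) ^ 2 ≤ lhat x - lhat xhat)
    (hmin : IsMinOn l (Set.Icc (-1 : ℝ) 1) xstar)
    (h1 : |lhat xstar - l xstar| ≤ ε) (h2 : |lhat xhat - l xhat| ≤ ε) :
    |xstar - xhat| ≤ 2 * Real.sqrt (ε / K) := by
  have hml : l xstar ≤ l xhat := hmin hxhat
  have hA := abs_le.mp h1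
  have hB := abs_le.mp h2
  have hs := hstrong xstar hxstar
  have key : (xstar - xhat) ^ 2 ≤ 4 * (ε / K) := by
    have h2e : lhat xstar - lhat xhat ≤ 2 * ε := by linarith [hA.1, hA.2, hB.1, hB.2]
    rw [show 4*(ε/K)=4*ε/K by ring, le_div_iff₀ hK]
    nlinarith
  have h4 : 4 * (ε / K) = (2 * Real.sqrt (ε / K)) ^ 2 := by
    rw [mul_pow, sq_sqrt (le_of_lt (div_pos hε hK))]; ring
  rw [h4] at key
  exact abs_le.mpr (abs_le_of_sq_le_sq' key (by positivity))
end

section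
/- For probability mass functions on ℕ, if |P(N = k) - e^{-λ} λᵏ/k!| ≤ ε · e^{-λ} λᵏ/k! for all k ≤ m, then the total variation distance between the law of N and Poisson(λ) satisfies d_TV(N, Poisson(λ)) ≤ ε + P(X > m) + (1/2)[P(N > m) + P(X > m)] where X ~ Poisson(λ); in particular d_TV(N, Poisson(λ)) ≤ ε + (3/2) P(X > m) + (1/2)(1 - Σ_{k=0}^m P(N = k)). -/
open Real MeasureTheory Finset

theorem tv_distance_poisson_approx {Ω : Type*} [MeasurableSpace Ω]
    (μ : Measure Ω) [IsProbabilityMeasure μ]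
    (N : Ω → ℕ) (hmeas : Measurable N)
    (lam ε : ℝ) (hlam : 0 < lam) (hε : 0 < ε) (m : ℕ)
    (pois : ℕ → ℝ) (hpois : ∀ k, pois k = Real.exp (-lam) * lam ^ k / k.factorial)
    (happrox : ∀ k ≤ m, |(μ {ω | N ω = k}).toReal - pois k| ≤ ε * pois k) :
    (1 / 2) * ∑' k : ℕ, |(μ {ω | N ω = k}).toReal - pois k|
      ≤ ε + (3 / 2) * (1 - ∑ k ∈ Finset.range (m + 1), pois k)
          + (1 / 2) * (1 - ∑ k ∈ Finset.range (m + 1), (μ {ω | N ω = k}).toReal) := by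
  set p : ℕ → ℝ := fun k => (μ {ω | N ω = k}).toReal with hp_def
  -- nonnegativity
  have hp_nonneg : ∀ k, 0 ≤ p k := fun k => ENNReal.toReal_nonneg
  have hq_nonneg : ∀ k, 0 ≤ pois k := by
    intro k
    rw [hpois]
    positivity
  -- the sets are measurable and disjoint, covering Ω
  have hmeasset : ∀ k : ℕ, MeasurableSet {ω | N ω = k} := fun k =>
    hmeas (measurableSet_singleton k)
  have hdisj : Pairwise (Function.onFun Disjoint fun k : ℕ => {ω | N ω = k}) := by
    intro i j hij
    simp only [Function.onFun, Set.disjoint_left]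
    intro ω hi hj
    exact hij (hi.symm.trans hj)
  have hcover : (⋃ k : ℕ, {ω | N ω = k}) = Set.univ := by
    ext ω; simp
  have hμsum : (∑' k : ℕ, μ {ω | N ω = k}) = 1 := by
    rw [← measure_iUnion hdisj hmeasset, hcover, measure_univ]
  have hp_summable : Summable p := by
    apply ENNReal.summable_toReal
    rw [hμsum]; exact ENNReal.one_ne_top
  have hp_tsum : (∑' k, p k) = 1 := by
    have h := ENNReal.tsum_toReal_eq (f := fun k : ℕ => μ {ω | N ω = k})
      (fun k => measure_ne_top μ _)
    rw [hμsum, ENNReal.toReal_one] at h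
    exact h.symm
  -- poisson pmf sums to 1
  have hq_summable : Summable pois := by
    have : Summable (fun k : ℕ => Real.exp (-lam) * (lam ^ k / k.factorial)) :=
      (Real.summable_pow_div_factorial lam).mul_left _
    apply this.congr
    intro k; rw [hpois]; ring
  have hq_tsum : (∑' k, pois k) = 1 := by
    have h1 : (∑' k : ℕ, (lam ^ k / k.factorial : ℝ)) = Real.exp lam := by
      rw [Real.exp_eq_exp_ℝ, NormedSpace.exp_eq_tsum_div]
    calc (∑' k, pois k) = ∑' k : ℕ, Real.exp (-lam) * (lam ^ k / k.factorial) := by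
          congr 1; ext k; rw [hpois]; ring
      _ = Real.exp (-lam) * Real.exp lam := by
          rw [tsum_mul_left, h1]
      _ = 1 := by rw [← Real.exp_add]; simp
  -- summability of |p - q|
  have hf_le : ∀ k, |p k - pois k| ≤ p k + pois k := by
    intro k
    calc |p k - pois k| ≤ |p k| + |pois k| := abs_sub _ _
      _ = p k + pois k := by rw [abs_of_nonneg (hp_nonneg k), abs_of_nonneg (hq_nonneg k)]
  have hf_summable : Summable (fun k => |p k - pois k|) :=
    Summable.of_nonneg_of_le (fun k => abs_nonneg _) hf_le (hp_summable.add hq_summable)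
  -- split sum
  have hsplit := Summable.sum_add_tsum_nat_add (m + 1) hf_summable
  have hsplit_p := Summable.sum_add_tsum_nat_add (m + 1) hp_summable
  have hsplit_q := Summable.sum_add_tsum_nat_add (m + 1) hq_summable
  -- head bound
  have hhead : ∑ k ∈ Finset.range (m + 1), |p k - pois k| ≤ ε := by
    calc ∑ k ∈ Finset.range (m + 1), |p k - pois k|
        ≤ ∑ k ∈ Finset.range (m + 1), ε * pois k := by
          apply Finset.sum_le_sum
          intro k hk
          exact happrox k (Nat.lt_succ_iff.mp (Finset.mem_range.mp hk))
      _ = ε * ∑ k ∈ Finset.range (m + 1), pois k := by rw [Finset.mul_sum]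
      _ ≤ ε * 1 := by
          apply mul_le_mul_of_nonneg_left _ hε.le
          rw [← hq_tsum]
          exact Summable.sum_le_tsum _ (fun k _ => hq_nonneg k) hq_summable
      _ = ε := mul_one ε
  -- tail bound
  have htail : (∑' k : ℕ, |p (k + (m + 1)) - pois (k + (m + 1))|)
      ≤ (1 - ∑ k ∈ Finset.range (m + 1), p k) + (1 - ∑ k ∈ Finset.range (m + 1), pois k) := by
    have h1 : (∑' k : ℕ, |p (k + (m + 1)) - pois (k + (m + 1))|)
        ≤ ∑' k : ℕ, (p (k + (m + 1)) + pois (k + (m + 1))) := by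
      refine Summable.tsum_le_tsum (fun k => hf_le _)
        ((summable_nat_add_iff (f := fun k => |p k - pois k|) (m + 1)).2 hf_summable)
        ((summable_nat_add_iff (f := fun k => p k + pois k) (m + 1)).2
          (hp_summable.add hq_summable))
    have h2 : (∑' k : ℕ, (p (k + (m + 1)) + pois (k + (m + 1))))
        = (∑' k : ℕ, p (k + (m + 1))) + ∑' k : ℕ, pois (k + (m + 1)) := by
      exact Summable.tsum_add ((summable_nat_add_iff (f := p) (m + 1)).2 hp_summable)
        ((summable_nat_add_iff (f := pois) (m + 1)).2 hq_summable)
    have h3 : (∑' k : ℕ, p (k + (m + 1))) = 1 - ∑ k ∈ Finset.range (m + 1), p k := by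
      have := hsplit_p; rw [hp_tsum] at this; linarith
    have h4 : (∑' k : ℕ, pois (k + (m + 1))) = 1 - ∑ k ∈ Finset.range (m + 1), pois k := by
      have := hsplit_q; rw [hq_tsum] at this; linarith
    rw [h2, h3, h4] at h1
    exact h1
  -- nonnegativity of remainders
  have hA : 0 ≤ 1 - ∑ k ∈ Finset.range (m + 1), pois k := by
    have := Summable.sum_le_tsum (Finset.range (m + 1)) (fun k _ => hq_nonneg k) hq_summable
    rw [hq_tsum] at this; linarith
  have hB : 0 ≤ 1 - ∑ k ∈ Finset.range (m + 1), p k := by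
    have := Summable.sum_le_tsum (Finset.range (m + 1)) (fun k _ => hp_nonneg k) hp_summable
    rw [hp_tsum] at this; linarith
  -- conclude
  have htot : (∑' k : ℕ, |p k - pois k|)
      ≤ ε + ((1 - ∑ k ∈ Finset.range (m + 1), p k) + (1 - ∑ k ∈ Finset.range (m + 1), pois k)) := by
    rw [← hsplit]; linarith
  linarith
end

section
/- Let u* minimize L(u) = ‖Aᵀu‖₁ + uᵀy + ‖u‖²/2 over u ∈ ℝⁿ, and let ũ* minimize L̃(u) = L(u) + |aᵀu| - aᵀu·β for a vector a ∈ ℝⁿ and β ∈ {-1,1}. Then ‖u* - ũ*‖ ≤ 2‖a‖. -/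
/-!
`L` is `1`-strongly convex and `L̃ = L + h` with `h u = |⟪a, u⟫| - β ⟪a, u⟫` convex. Quadratic
growth of each objective away from its minimiser, added up, gives
`‖u* - ũ*‖² ≤ h u* - h ũ*`, and `h` is `2 ‖a‖`-Lipschitz because `|β| = 1`.
-/

open Finset Filter Topology

theorem ConvexOn.sum {𝕜 E β ι : Type*} [Semiring 𝕜] [PartialOrder 𝕜] [AddCommMonoid E]
    [AddCommMonoid β] [PartialOrder β] [IsOrderedAddMonoid β] [SMul 𝕜 E] [Module 𝕜 β]
    {s : Set E} (hs : Convex 𝕜 s) {t : Finset ι} {f : ι → E → β}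
    (hf : ∀ i ∈ t, ConvexOn 𝕜 s (f i)) : ConvexOn 𝕜 s fun x ↦ ∑ i ∈ t, f i x := by
  induction t using Finset.cons_induction with
  | empty => simpa using convexOn_const (0 : β) hs
  | cons i t hi ih =>
    simp only [sum_cons]
    exact (hf i (mem_cons_self i t)).add (ih fun j hj ↦ hf j (mem_cons_of_mem hj))

section NormedSpace

variable {E : Type*} [NormedAddCommGroup E] [NormedSpace ℝ E] {s : Set E}

theorem StrongConvexOn.add_convexOn {m : ℝ} {f g : E → ℝ} (hf : StrongConvexOn s m f)
    (hg : ConvexOn ℝ s g) : StrongConvexOn s m (f + g) := by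
  unfold StrongConvexOn
  simpa using hf.add (uniformConvexOn_zero.2 hg)

/-- Quadratic growth away from a minimiser: let `t ↓ 0` in the defining inequality of uniform
convexity along the segment from `u` to `v`. -/
theorem UniformConvexOn.add_le_of_isMinOn {φ : ℝ → ℝ} {f : E → ℝ} (hf : UniformConvexOn s φ f)
    {u v : E} (hu : u ∈ s) (hv : v ∈ s) (hmin : IsMinOn f s u) : f u + φ ‖u - v‖ ≤ f v := by
  have hlim : Tendsto (fun t : ℝ ↦ f u + (1 - t) * φ ‖u - v‖) (𝓝[>] 0)
      (𝓝 (f u + φ ‖u - v‖)) :=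
    tendsto_nhdsWithin_of_tendsto_nhds <|
      (by fun_prop : Continuous fun t : ℝ ↦ f u + (1 - t) * φ ‖u - v‖).tendsto' 0 _ (by simp)
  refine le_of_tendsto hlim ?_
  filter_upwards [Ioo_mem_nhdsGT one_pos] with t ⟨ht0, ht1⟩
  have hseg := hf.2 hu hv (sub_nonneg.2 ht1.le) ht0.le (sub_add_cancel 1 t)
  have hle := hmin (hf.1 hu hv (sub_nonneg.2 ht1.le) ht0.le (sub_add_cancel 1 t))
  simp only [smul_eq_mul, Set.mem_ofPred_eq] at hseg hle
  have : t * (f u + (1 - t) * φ ‖u - v‖) ≤ t * f v := by nlinarith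
  exact le_of_mul_le_mul_left this ht0

theorem StrongConvexOn.mul_norm_sub_sq_le_of_isMinOn_add {m : ℝ} {f h : E → ℝ} {u v : E}
    (hf : StrongConvexOn s m f) (hfh : StrongConvexOn s m (f + h)) (hu : u ∈ s) (hv : v ∈ s)
    (hmin_f : IsMinOn f s u) (hmin_fh : IsMinOn (f + h) s v) :
    m * ‖u - v‖ ^ 2 ≤ h u - h v := by
  have h₁ := UniformConvexOn.add_le_of_isMinOn hf hu hv hmin_f
  have h₂ := UniformConvexOn.add_le_of_isMinOn hfh hv hu hmin_fh
  rw [norm_sub_rev v u] at h₂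
  simp only [Pi.add_apply] at h₂
  linarith

end NormedSpace

section InnerProductSpace

variable {E : Type*} [NormedAddCommGroup E] [InnerProductSpace ℝ E]

theorem convexOn_univ_abs_inner (a : E) : ConvexOn ℝ Set.univ fun x ↦ |inner ℝ a x| :=
  (convexOn_norm convex_univ).comp_linearMap (innerₛₗ ℝ a)

theorem convexOn_univ_inner_left (y : E) : ConvexOn ℝ Set.univ fun x ↦ inner ℝ x y := by
  simpa [real_inner_comm] using (innerₛₗ ℝ y).convexOn convex_univ

theorem concaveOn_univ_inner_mul (a : E) (c : ℝ) :
    ConcaveOn ℝ Set.univ fun x ↦ inner ℝ a x * c :=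
  ((innerₛₗ ℝ (c • a)).concaveOn convex_univ).congr fun x _ ↦ by simp [mul_comm]

end InnerProductSpace

theorem abs_sub_mul_sub_le {β : ℝ} (hβ : |β| ≤ 1) (s t : ℝ) :
    (|s| - s * β) - (|t| - t * β) ≤ 2 * |s - t| := by
  have hβ' : (t - s) * β ≤ |s - t| :=
    calc (t - s) * β ≤ |(t - s) * β| := le_abs_self _
      _ = |s - t| * |β| := by rw [abs_mul, abs_sub_comm]
      _ ≤ |s - t| := mul_le_of_le_one_right (abs_nonneg _) hβ
  linarith [abs_sub_abs_le_abs_sub s t]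

theorem leave_one_out_perturbation (n m : ℕ)
    (A : Fin m → EuclideanSpace ℝ (Fin n))
    (y a : EuclideanSpace ℝ (Fin n)) (β : ℝ) (hβ : β = 1 ∨ β = -1)
    (L Lt : EuclideanSpace ℝ (Fin n) → ℝ)
    (hL : ∀ u, L u = (∑ j, |(inner ℝ (A j) u : ℝ)|) + (inner ℝ u y : ℝ) + ‖u‖ ^ 2 / 2)
    (hLt : ∀ u, Lt u = L u + |(inner ℝ a u : ℝ)| - (inner ℝ a u : ℝ) * β)
    (ustar utilde : EuclideanSpace ℝ (Fin n))
    (hustar : IsMinOn L Set.univ ustar)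
    (hutilde : IsMinOn Lt Set.univ utilde) :
    ‖ustar - utilde‖ ≤ 2 * ‖a‖ := by
  set h : EuclideanSpace ℝ (Fin n) → ℝ := fun u ↦ |inner ℝ a u| - inner ℝ a u * β
  have hLt_eq : Lt = L + h := funext fun u ↦ by rw [hLt, Pi.add_apply, add_sub_assoc]
  have hL_convex : StrongConvexOn Set.univ 1 L := by
    refine strongConvexOn_iff_convex.2 <| ((ConvexOn.sum convex_univ (t := univ)
      fun j _ ↦ convexOn_univ_abs_inner (A j)).add (convexOn_univ_inner_left y)).congr fun u _ ↦ ?_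
    simp only [hL, Pi.add_apply]
    ring
  have h_convex : ConvexOn ℝ Set.univ h :=
    (convexOn_univ_abs_inner a).sub (concaveOn_univ_inner_mul a β)
  rw [hLt_eq] at hutilde
  have key := hL_convex.mul_norm_sub_sq_le_of_isMinOn_add (hL_convex.add_convexOn h_convex)
    (Set.mem_univ _) (Set.mem_univ _) hustar hutilde
  have hβ_abs : |β| ≤ 1 := by rcases hβ with rfl | rfl <;> norm_num
  have h_lip : h ustar - h utilde ≤ 2 * ‖a‖ * ‖ustar - utilde‖ :=
    calc h ustar - h utilde ≤ 2 * |inner ℝ a ustar - inner ℝ a utilde| :=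
          abs_sub_mul_sub_le hβ_abs _ _
      _ = 2 * |inner ℝ a (ustar - utilde)| := by rw [inner_sub_right]
      _ ≤ 2 * ‖a‖ * ‖ustar - utilde‖ := by
          rw [mul_assoc]; gcongr; exact abs_real_inner_le_norm _ _
  nlinarith [norm_nonneg (ustar - utilde), norm_nonneg a]
end
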